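/- (Lemma 20) Let ρ = e^{iπ/3} and let g = (A B; C D) ∈ SL₂(ℤ) be a hyperbolic matrix with positive entries whose axis passes through ρ, i.e. D − A = 2(B − C). If γ ∈ SL₂(ℝ) satisfies X_γ = A + B/2, Y_γ = D + C/2, and Z_γ = A/2 + B (note that D − A = 2(B − C) makes A/2 + B = D/2 + C), then γρ is the midpoint of the geodesic segment from ρ to gρ: d(ρ, γρ) = d(γρ, gρ) = (1/2)·d(ρ, gρ), where d is the hyperbolic distance on the upper half-plane. -/

import Mathlib

open Complex Matrix MatrixGroups UpperHalfPlane Real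

noncomputable section

/-- the elliptic point `ρ = e^{iπ/3} = 1/2 + i√3/2`. -/
def rho : ℍ := ⟨⟨1/2, Real.sqrt 3 / 2⟩, by positivity⟩

/-- `X_γ = |aρ+b|²` for `γ ∈ SL₂(ℝ)`. -/
def XrR (γ : SL(2,ℝ)) : ℝ := (‖(γ 0 0 : ℝ) * (rho : ℂ) + ((γ 0 1 : ℝ) : ℂ)‖) ^ 2

/-- `Y_γ = |cρ+d|²`. -/
def YrR (γ : SL(2,ℝ)) : ℝ := (‖(γ 1 0 : ℝ) * (rho : ℂ) + ((γ 1 1 : ℝ) : ℂ)‖) ^ 2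

/-- `Z_γ = ac + bd + (1/2)(ad+bc)`. -/
def ZrR (γ : SL(2,ℝ)) : ℝ :=
  γ 0 0 * γ 1 0 + γ 0 1 * γ 1 1 + (1/2) * (γ 0 0 * γ 1 1 + γ 0 1 * γ 1 0)

lemma rho_re : (rho : ℂ).re = 1/2 := rfl
lemma rho_im : (rho : ℂ).im = Real.sqrt 3 / 2 := rfl
lemma rho_re' : rho.re = 1/2 := rfl
lemma rho_im' : rho.im = Real.sqrt 3 / 2 := rfl

lemma npos (c d : ℝ) (hcd : c ≠ 0 ∨ d ≠ 0) : 0 < c^2 + c*d + d^2 := by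
  rcases hcd with h | h
  · nlinarith [sq_nonneg (c + d), sq_nonneg (c - d), sq_pos_of_ne_zero h]
  · nlinarith [sq_nonneg (c + d), sq_nonneg (c - d), sq_pos_of_ne_zero h]

lemma hS : Real.sqrt 3 ^ 2 = 3 := Real.sq_sqrt (by norm_num)
lemma hSpos : 0 < Real.sqrt 3 := Real.sqrt_pos.mpr (by norm_num)

lemma num_re (a b : ℝ) : (((a:ℂ) * (rho:ℂ) + b)).re = a/2 + b := by
  simp [Complex.add_re, Complex.mul_re, rho_re, rho_im, rho_re', rho_im']; ring
lemma num_im (a b : ℝ) : (((a:ℂ) * (rho:ℂ) + b)).im = a * (Real.sqrt 3/2) := by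
  simp [Complex.add_im, Complex.mul_im, rho_re, rho_im, rho_re', rho_im']

lemma core_re (a b c d : ℝ) (hdet : a*d - b*c = 1) :
    (((a:ℂ) * (rho:ℂ) + b) / ((c:ℂ)*(rho:ℂ) + d)).re
      = (a*c + b*d + (a*d+b*c)/2)/(c^2+c*d+d^2) := by
  have hcd : c ≠ 0 ∨ d ≠ 0 := by
    by_contra h; push_neg at h; rw [h.1, h.2] at hdet; norm_num at hdet
  have hpos := npos c d hcd
  have hnorm : Complex.normSq ((c:ℂ)*(rho:ℂ) + d) = c^2 + c*d + d^2 := by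
    simp only [Complex.normSq_apply, Complex.add_re, Complex.add_im, Complex.mul_re,
      Complex.mul_im, Complex.ofReal_re, Complex.ofReal_im, rho_re, rho_im]
    linear_combination (c^2/4) * hS
  rw [Complex.div_re, hnorm, num_re, num_im, num_re, num_im, ← add_div,
    div_eq_div_iff hpos.ne' hpos.ne']
  linear_combination (a*c/4)*(c^2+c*d+d^2)*hS

lemma core_im (a b c d : ℝ) (hdet : a*d - b*c = 1) :
    (((a:ℂ) * (rho:ℂ) + b) / ((c:ℂ)*(rho:ℂ) + d)).im
      = (Real.sqrt 3/2)/(c^2+c*d+d^2) := by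
  have hcd : c ≠ 0 ∨ d ≠ 0 := by
    by_contra h; push_neg at h; rw [h.1, h.2] at hdet; norm_num at hdet
  have hpos := npos c d hcd
  have hnorm : Complex.normSq ((c:ℂ)*(rho:ℂ) + d) = c^2 + c*d + d^2 := by
    simp only [Complex.normSq_apply, Complex.add_re, Complex.add_im, Complex.mul_re,
      Complex.mul_im, Complex.ofReal_re, Complex.ofReal_im, rho_re, rho_im]
    linear_combination (c^2/4) * hS
  rw [Complex.div_im, hnorm, num_re, num_im, num_re, num_im, ← sub_div,
    div_eq_div_iff hpos.ne' hpos.ne']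
  linear_combination (Real.sqrt 3/2)*(c^2+c*d+d^2)*hdet

lemma smulR_coe (γ : SL(2,ℝ)) : ((γ • rho : ℍ) : ℂ)
    = (((γ 0 0 :ℝ):ℂ) * (rho:ℂ) + ((γ 0 1:ℝ):ℂ)) / (((γ 1 0:ℝ):ℂ)*(rho:ℂ) + ((γ 1 1:ℝ):ℂ)) := by
  rw [UpperHalfPlane.specialLinearGroup_apply]; simp

lemma smulZ_coe (g : SL(2,ℤ)) : ((g • rho : ℍ) : ℂ)
    = ((((g 0 0 :ℤ):ℝ):ℂ) * (rho:ℂ) + (((g 0 1:ℤ):ℝ):ℂ)) / ((((g 1 0:ℤ):ℝ):ℂ)*(rho:ℂ) + (((g 1 1:ℤ):ℝ):ℂ)) := by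
  rw [UpperHalfPlane.specialLinearGroup_apply]; simp


set_option maxHeartbeats 2000000

/-- Lemma 20: if `g = (A B; C D) ∈ SL₂(ℤ)` is hyperbolic with positive
entries and its axis passes through `ρ` (`D − A = 2(B − C)`), and `γ ∈ SL₂(ℝ)` satisfies
`X_γ = A + B/2`, `Y_γ = D + C/2`, `Z_γ = A/2 + B`, then `γρ` is the midpoint of the geodesic
segment from `ρ` to `gρ`. -/
theorem midpoint_of_geodesic (g : SL(2,ℤ))
    (hhyp : 2 < |(g 0 0 : ℤ) + g 1 1|)
    (hpos : ∀ i j, 0 < g i j)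
    (haxis : (g 1 1 : ℤ) - g 0 0 = 2 * ((g 0 1 : ℤ) - g 1 0))
    (γ : SL(2,ℝ))
    (hX : XrR γ = ((g 0 0 : ℤ) : ℝ) + ((g 0 1 : ℤ) : ℝ) / 2)
    (hY : YrR γ = ((g 1 1 : ℤ) : ℝ) + ((g 1 0 : ℤ) : ℝ) / 2)
    (hZ : ZrR γ = ((g 0 0 : ℤ) : ℝ) / 2 + ((g 0 1 : ℤ) : ℝ)) :
    dist rho (γ • rho) = dist (γ • rho) (g • rho) ∧
    dist rho (γ • rho) = (1/2) * dist rho (g • rho) := by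
  set A : ℝ := ((g 0 0 : ℤ) : ℝ) with hA
  set B : ℝ := ((g 0 1 : ℤ) : ℝ) with hB
  set C : ℝ := ((g 1 0 : ℤ) : ℝ) with hC
  set D : ℝ := ((g 1 1 : ℤ) : ℝ) with hD
  have hdetZ : (g 0 0 : ℤ) * g 1 1 - g 0 1 * g 1 0 = 1 := by
    have := g.prop; rwa [Matrix.det_fin_two] at this
  have hdetg : A * D - B * C = 1 := by
    rw [hA, hB, hC, hD]; exact_mod_cast hdetZ
  have haxisR : D - A = 2 * (B - C) := by
    rw [hA, hB, hC, hD]; exact_mod_cast haxis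
  have hA1 : 1 ≤ A := by rw [hA]; exact_mod_cast hpos 0 0
  have hB1 : 1 ≤ B := by rw [hB]; exact_mod_cast hpos 0 1
  have hC1 : 1 ≤ C := by rw [hC]; exact_mod_cast hpos 1 0
  have hD1 : 1 ≤ D := by rw [hD]; exact_mod_cast hpos 1 1
  have hdetγ : γ 0 0 * γ 1 1 - γ 0 1 * γ 1 0 = 1 := by
    have := γ.prop; rwa [Matrix.det_fin_two] at this
  -- Y of γ as polynomial
  have hYpoly : YrR γ = (γ 1 0)^2 + (γ 1 0)*(γ 1 1) + (γ 1 1)^2 := by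
    rw [YrR, Complex.sq_norm, Complex.normSq_apply]
    simp only [Complex.add_re, Complex.add_im, Complex.mul_re, Complex.mul_im,
      Complex.ofReal_re, Complex.ofReal_im, rho_re, rho_im]
    linear_combination ((γ 1 0)^2/4) * hS
  have hZpoly : ZrR γ = γ 0 0 * γ 1 0 + γ 0 1 * γ 1 1 + (γ 0 0 * γ 1 1 + γ 0 1 * γ 1 0)/2 := by
    rw [ZrR]; ring
  -- coordinates of m = γ • rho
  have hmre : ((γ • rho : ℍ) : ℂ).re = (A/2 + B) / (D + C/2) := by
    rw [smulR_coe, core_re _ _ _ _ hdetγ, ← hYpoly, ← hZpoly, hY, hZ]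
  have hmim : ((γ • rho : ℍ) : ℂ).im = (Real.sqrt 3/2) / (D + C/2) := by
    rw [smulR_coe, core_im _ _ _ _ hdetγ, ← hYpoly, hY]
  -- coordinates of w = g • rho
  have hwre : ((g • rho : ℍ) : ℂ).re = (A*C + B*D + (A*D+B*C)/2) / (C^2 + C*D + D^2) := by
    rw [smulZ_coe, core_re _ _ _ _ hdetg]
  have hwim : ((g • rho : ℍ) : ℂ).im = (Real.sqrt 3/2) / (C^2 + C*D + D^2) := by
    rw [smulZ_coe, core_im _ _ _ _ hdetg]
  have hY0 : (0:ℝ) < D + C/2 := by linarith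
  have hYg0 : (0:ℝ) < C^2 + C*D + D^2 := by nlinarith
  have him_m : (γ • rho : ℍ).im = (Real.sqrt 3/2)/(D + C/2) := by
    rw [← UpperHalfPlane.coe_im]; exact hmim
  have him_w : (g • rho : ℍ).im = (Real.sqrt 3/2)/(C^2 + C*D + D^2) := by
    rw [← UpperHalfPlane.coe_im]; exact hwim
  have hd1 : dist (rho:ℂ) ((γ • rho : ℍ):ℂ) ^2
      = (1/2 - (A/2+B)/(D+C/2))^2 + (Real.sqrt 3/2 - (Real.sqrt 3/2)/(D+C/2))^2 := by
    rw [Complex.dist_eq_re_im, Real.sq_sqrt (by positivity), rho_re, rho_im, hmre, hmim]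
  have hd2 : dist ((γ • rho : ℍ):ℂ) ((g • rho : ℍ):ℂ) ^2
      = ((A/2+B)/(D+C/2) - (A*C + B*D + (A*D+B*C)/2)/(C^2+C*D+D^2))^2
        + ((Real.sqrt 3/2)/(D+C/2) - (Real.sqrt 3/2)/(C^2+C*D+D^2))^2 := by
    rw [Complex.dist_eq_re_im, Real.sq_sqrt (by positivity), hmre, hmim, hwre, hwim]
  have hd3 : dist (rho:ℂ) ((g • rho : ℍ):ℂ) ^2
      = (1/2 - (A*C + B*D + (A*D+B*C)/2)/(C^2+C*D+D^2))^2
        + (Real.sqrt 3/2 - (Real.sqrt 3/2)/(C^2+C*D+D^2))^2 := by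
    rw [Complex.dist_eq_re_im, Real.sq_sqrt (by positivity), rho_re, rho_im, hwre, hwim]
  have e1 : Real.cosh (dist rho (γ • rho)) = (A+D)/2 := by
    rw [UpperHalfPlane.cosh_dist, hd1, rho_im', him_m]
    have h3 : Real.sqrt 3 ≠ 0 := hSpos.ne'
    field_simp
    linear_combination ((4:ℝ) + (2:ℝ)*C*D + (1:ℝ)*C^2 + (-4:ℝ)*A*D + (-2:ℝ)*A*C) * hS + ((-12:ℝ)) * hdetg + ((4:ℝ)*D + (2:ℝ)*C + (-8:ℝ)*B + (-4:ℝ)*A) * haxisR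
  have e2 : Real.cosh (dist (γ • rho) (g • rho)) = (A+D)/2 := by
    rw [UpperHalfPlane.cosh_dist, hd2, him_m, him_w]
    have h3 : Real.sqrt 3 ≠ 0 := hSpos.ne'
    field_simp
    linear_combination ((4:ℝ)*D^2 + (4:ℝ)*C*D + (2:ℝ)*C*D^3 + (1:ℝ)*C^2 + (6:ℝ)*C^2*D^2 + (6:ℝ)*C^3*D + (4:ℝ)*C^4 + (-4:ℝ)*A*D^3 + (-6:ℝ)*A*C*D^2 + (-6:ℝ)*A*C^2*D + (-2:ℝ)*A*C^3) * hS + ((-27:ℝ)*C^2 + (72:ℝ)*B*C + (-9:ℝ)*B*C^3 + (-48:ℝ)*B^2 + (36:ℝ)*A*C + (-18:ℝ)*A*C^3 + (-48:ℝ)*A*B + (18:ℝ)*A*B*C^2 + (-12:ℝ)*A^2 + (9:ℝ)*A^2*C^2) * hdetg + ((12:ℝ)*D + (-12:ℝ)*C + (6:ℝ)*C*D^2 + (6:ℝ)*C^2*D + (6:ℝ)*C^3 + (24:ℝ)*B + (12:ℝ)*B*C*D + (-12:ℝ)*B*C^2 + (24:ℝ)*B^2*C + (12:ℝ)*A + (-12:ℝ)*A*D^2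 + (12:ℝ)*A*C*D + (-9:ℝ)*A*C^2 + (-24:ℝ)*A*B*D + (12:ℝ)*A*B*C + (-9:ℝ)*A*B*C^3 + (-12:ℝ)*A^2*D + (9:ℝ)*A^2*C^2*D) * haxisR
  have e3 : Real.cosh (dist rho (g • rho)) = (A+D)^2/2 - 1 := by
    rw [UpperHalfPlane.cosh_dist, hd3, rho_im', him_w]
    have h3 : Real.sqrt 3 ≠ 0 := hSpos.ne'
    field_simp
    linear_combination ((1:ℝ) + (2:ℝ)*D^2 + (2:ℝ)*C*D + (1:ℝ)*C*D^3 + (2:ℝ)*C^2 + (2:ℝ)*C^2*D^2 + (2:ℝ)*C^3*D + (1:ℝ)*C^4 + (-2:ℝ)*A*D^3 + (-2:ℝ)*A*C*D^2 + (-2:ℝ)*A*C^2*D + (-1:ℝ)*A^2*D^2 + (-1:ℝ)*A^2*C*D + (-1:ℝ)*A^2*C^2) * hS + ((-3:ℝ) + (-18:ℝ)*C^2 + (39:ℝ)*B*C + (-24:ℝ)*B^2 + (24:ℝ)*A*C + (-30:ℝ)*A*B + (-9:ℝ)*A^2) * hdetg + ((6:ℝ)*D + (1:ℝ)*D^3 +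 (-6:ℝ)*C + (3:ℝ)*C*D^2 + (3:ℝ)*C^2*D + (2:ℝ)*C^3 + (12:ℝ)*B + (-2:ℝ)*B*D^2 + (4:ℝ)*B*C*D + (-8:ℝ)*B*C^2 + (12:ℝ)*B^2*C + (9:ℝ)*A + (-7:ℝ)*A*D^2 + (5:ℝ)*A*C*D + (-1:ℝ)*A*C^2 + (-12:ℝ)*A*B*D + (9:ℝ)*A*B*C + (-9:ℝ)*A^2*D) * haxisR
  have h12 : dist rho (γ • rho) = dist (γ • rho) (g • rho) :=
    Real.cosh_strictMonoOn.injOn dist_nonneg dist_nonneg (e1.trans e2.symm)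
  have hdbl : Real.cosh (2 * dist rho (γ • rho)) = Real.cosh (dist rho (g • rho)) := by
    rw [Real.cosh_two_mul, Real.sinh_sq, e1, e3]; ring
  have h2 : 2 * dist rho (γ • rho) = dist rho (g • rho) :=
    Real.cosh_strictMonoOn.injOn (mul_nonneg (by norm_num) dist_nonneg) dist_nonneg hdbl
  exact ⟨h12, by linarith⟩
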